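/- A fullerene graph cannot contain a cycle of length 3 or 4; that is, the girth of a fullerene is at least 5 (and exactly 5, since every fullerene has a pentagonal face whose boundary is a 5-cycle). -/

import Mathlib

open SimpleGraph

/-- A combinatorial model of (a planar embedding of) a fullerene: a connected,
cubic, 3-connected graph together with its collection of faces, each face
recorded by the edge set of its facial cycle of length 5 or 6, such that every
edge lies on exactly two faces and Euler's formula holds. -/
structure Fullerene (V : Type) [Fintype V] [DecidableEq V] where
  G : SimpleGraph V
  connected : G.Connected
  cubic : ∀ v : V, (G.neighborSet v).ncard = 3
  threeConnected : ∀ s : Set V, s.ncard ≤ 2 →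
    ((⊤ : G.Subgraph).deleteVerts s).coe.Connected
  faces : Finset (Finset (Sym2 V))
  face_isCycle : ∀ f ∈ faces, ∃ (v : V) (c : G.Walk v v),
    c.IsCycle ∧ c.edges.toFinset = f
  face_size : ∀ f ∈ faces, f.card = 5 ∨ f.card = 6
  edge_two_faces : ∀ e ∈ G.edgeSet, (faces.filter (fun f => e ∈ f)).card = 2
  euler : (Fintype.card V : ℤ) - G.edgeSet.ncard + faces.card = 2

/-- `S` is a cyclic edge cutset of `G`: `S` consists of edges of `G`, and there
is a vertex set `A` such that every edge of `G` crossing between `A` and its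
complement lies in `S`, while both the subgraph induced on `A` and the one
induced on `Aᶜ` contain a cycle. -/
def IsCyclicEdgeCut {V : Type*} (G : SimpleGraph V) (S : Set (Sym2 V)) : Prop :=
  S ⊆ G.edgeSet ∧ ∃ A : Set V,
    (∀ u v : V, G.Adj u v → u ∈ A → v ∉ A → s(u, v) ∈ S) ∧
    ¬ (G.induce A).IsAcyclic ∧ ¬ (G.induce Aᶜ).IsAcyclic

/-- `G` is cyclically `k`-edge-connected: every cyclic edge cutset has at
least `k` edges. -/
def CyclicallyEdgeConnected {V : Type*} (G : SimpleGraph V) (k : ℕ) : Prop :=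
  ∀ S : Set (Sym2 V), IsCyclicEdgeCut G S → k ≤ S.ncard

/-- `G` admits a nontrivial cyclic-5-edge cutset: a cyclic edge cutset of
5 edges for which neither side of the separation is a single 5-cycle
(in particular neither side has exactly 5 vertices). -/
def HasNontrivialCyclic5Cut {V : Type*} (G : SimpleGraph V) : Prop :=
  ∃ S : Set (Sym2 V), S.ncard = 5 ∧ S ⊆ G.edgeSet ∧ ∃ A : Set V,
    (∀ u v : V, G.Adj u v → u ∈ A → v ∉ A → s(u, v) ∈ S) ∧
    ¬ (G.induce A).IsAcyclic ∧ ¬ (G.induce Aᶜ).IsAcyclic ∧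
    A.ncard ≠ 5 ∧ Aᶜ.ncard ≠ 5

section FullereneAux

open Finset

set_option linter.unusedSectionVars false

variable {V : Type} [Fintype V] [DecidableEq V] {G : SimpleGraph V}

/-- The subgraph of `G` on vertex set `B`, as a graph on the same vertex type. -/
private def myRestrict (G : SimpleGraph V) (B : Set V) : SimpleGraph V where
  Adj u v := G.Adj u v ∧ u ∈ B ∧ v ∈ B
  symm := ⟨fun u v ⟨h, hu, hv⟩ => ⟨h.symm, hv, hu⟩⟩
  loopless := ⟨fun v ⟨h, _⟩ => G.loopless.irrefl v h⟩

private lemma myRestrict_support_mem {B : Set V} :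
    ∀ {u v : V} (p : (myRestrict G B).Walk u v), u ∈ B → ∀ x ∈ p.support, x ∈ B := by
  intro u v p
  induction p with
  | nil => intro hu x hx; simp at hx; exact hx ▸ hu
  | cons h p ih =>
    intro hu x hx
    rcases List.mem_cons.mp (by simpa using hx) with rfl | hx'
    · exact hu
    · exact ih h.2.2 x hx'

private lemma exists_walk_induce {A : Set V} :
    ∀ {u v : V} (p : G.Walk u v) (hp : ∀ x ∈ p.support, x ∈ A) (hu : u ∈ A) (hv : v ∈ A),
      ∃ q : (G.induce A).Walk ⟨u, hu⟩ ⟨v, hv⟩, q.map (Embedding.induce A).toHom = p := by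
  intro u v p
  induction p with
  | nil => intro hp hu hv; exact ⟨Walk.nil, rfl⟩
  | @cons u b v h p ih =>
    intro hp hu hv
    have hb : b ∈ A := hp b (by simp)
    obtain ⟨q, hq⟩ := ih (fun x hx => hp x (by simp [hx])) hb hv
    refine ⟨Walk.cons (by exact h : (G.induce A).Adj ⟨u, hu⟩ ⟨b, hb⟩) q, ?_⟩
    subst hq; rfl

private lemma not_isAcyclic_induce {A : Set V} {v : V} (c : G.Walk v v) (hc : c.IsCycle)
    (hA : ∀ x ∈ c.support, x ∈ A) : ¬ (G.induce A).IsAcyclic := by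
  have hv : v ∈ A := hA v c.start_mem_support
  obtain ⟨q, hq⟩ := exists_walk_induce c hA hv hv
  intro hac
  exact hac q ((Walk.map_isCycle_iff_of_injective
    (Embedding.induce (G := G) A).injective).mp (hq ▸ hc))

/-- A nonempty set in which every vertex has at least two neighbours inside the
set contains a cycle. -/
private lemma exists_cycle_in_set {B C : Set V} (hCB' : C ⊆ B) (hne : C.Nonempty)
    (hdeg : ∀ v ∈ C, 2 ≤ (G.neighborSet v ∩ C).ncard) :
    ∃ (v : V) (c : G.Walk v v), c.IsCycle ∧ ∀ x ∈ c.support, x ∈ B := by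
  classical
  obtain ⟨b, hb⟩ := hne
  set H := myRestrict G C with hHdef
  have hHnbr : ∀ v ∈ C, H.neighborSet v = G.neighborSet v ∩ C := by
    intro v hv
    ext w
    simp only [mem_neighborSet, Set.mem_inter_iff]
    exact ⟨fun h => ⟨h.1, h.2.2⟩, fun h => ⟨h.1, hv, h.2⟩⟩
  -- a path of maximal length in H
  let S : Set ℕ := {n | ∃ (u v : V) (p : H.Walk u v), p.IsPath ∧ p.length = n}
  have hSfin : S.Finite := (Set.finite_Iio (Fintype.card V)).subset (by
    rintro n ⟨u, v, p, hp, rfl⟩; exact hp.length_lt)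
  have hSne : S.Nonempty := ⟨0, b, b, Walk.nil, Walk.IsPath.nil, rfl⟩
  obtain ⟨n, hnS, hmax⟩ := hSfin.toFinset.exists_max_image id (by
    simpa [Set.Finite.toFinset_nonempty] using hSne)
  rw [Set.Finite.mem_toFinset] at hnS
  have hmax' : ∀ m ∈ S, m ≤ n := fun m hm => hmax m (hSfin.mem_toFinset.mpr hm)
  obtain ⟨u, v, p, hp, hlen⟩ := hnS
  have hn1 : 1 ≤ n := by
    obtain ⟨w, hw⟩ : (H.neighborSet b).Nonempty := by
      apply Set.nonempty_of_ncard_ne_zero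
      rw [hHnbr b hb]
      have := hdeg b hb; omega
    refine hmax' 1 ⟨b, w, Walk.cons hw Walk.nil, ?_, rfl⟩
    refine Walk.IsPath.nil.cons ?_
    have : b ≠ w := (show H.Adj b w from hw).ne
    simp [this]
  have hnbr_sup : ∀ w, H.Adj u w → w ∈ p.support := by
    intro w hw
    by_contra hws
    have hgood : (Walk.cons hw.symm p).IsPath := hp.cons hws
    have := hmax' _ ⟨w, v, _, hgood, rfl⟩
    simp [hlen] at this
  cases p with
  | nil => simp [← hlen] at hn1
  | @cons u x v hux q =>
    have hu : u ∈ C := hux.2.1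
    have h2 : 2 ≤ (H.neighborSet u).ncard := by rw [hHnbr u hu]; exact hdeg u hu
    obtain ⟨w, hwN, hwx⟩ := Set.exists_ne_of_one_lt_ncard (s := H.neighborSet u) (by omega) x
    have hwadj : H.Adj u w := hwN
    have hwsup : w ∈ q.support := by
      have := hnbr_sup w hwadj
      rcases List.mem_cons.mp (by simpa using this) with rfl | h
      · exact absurd rfl hwadj.ne
      · exact h
    have hqp := (Walk.cons_isPath_iff hux q).mp hp
    have hr : (q.takeUntil w hwsup).IsPath := hqp.1.takeUntil hwsup
    have hpr : (Walk.cons hux (q.takeUntil w hwsup)).IsPath :=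
      hr.cons (fun hur => hqp.2 (Walk.support_takeUntil_subset _ hwsup hur))
    let P : H.Path w u := ⟨(Walk.cons hux (q.takeUntil w hwsup)).reverse, hpr.reverse⟩
    have hedge : s(u, w) ∉ (P : H.Walk w u).edges := by
      intro hmem
      rw [Walk.edges_reverse, List.mem_reverse] at hmem
      rw [Walk.edges_cons, List.mem_cons] at hmem
      rcases hmem with heq | hmem'
      · rw [Sym2.eq_iff] at heq
        rcases heq with ⟨-, rfl⟩ | ⟨h1, -⟩
        · exact hwx rfl
        · exact (show H.Adj u x from hux).ne h1
      · exact hqp.2 (Walk.support_takeUntil_subset _ hwsup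
          ((q.takeUntil w hwsup).fst_mem_support_of_mem_edges hmem'))
    have hcyc : (Walk.cons hwadj ↑P).IsCycle := SimpleGraph.Path.cons_isCycle P hwadj hedge
    have hsub : ∀ e ∈ (Walk.cons hwadj (P : H.Walk w u)).edges, e ∈ G.edgeSet := by
      intro e he
      exact SimpleGraph.edgeSet_mono (fun a b (h : H.Adj a b) => h.1)
        (Walk.edges_subset_edgeSet _ he)
    refine ⟨u, (Walk.cons hwadj ↑P).transfer G hsub, Walk.IsCycle.transfer hcyc hsub, ?_⟩
    rw [Walk.support_transfer]
    intro x hx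
    exact hCB' (myRestrict_support_mem _ hu x hx)

/-- edges of `G` with both endpoints in `C` -/
private def edgesIn (G : SimpleGraph V) (C : Set V) : Set (Sym2 V) :=
  {e | e ∈ G.edgeSet ∧ ∀ x ∈ e, x ∈ C}

private lemma edges_peel : ∀ (n : ℕ) (C : Set V), C.ncard = n →
    (∀ C' ⊆ C, C'.Nonempty → ∃ v ∈ C', (G.neighborSet v ∩ C').ncard ≤ 1) →
    (edgesIn G C).ncard < C.ncard ∨ C = ∅ := by
  intro n
  induction n using Nat.strong_induction_on with
  | _ n ih =>
    intro C hCn hyp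
    rcases C.eq_empty_or_nonempty with rfl | hne
    · exact Or.inr rfl
    left
    obtain ⟨v, hv, hvlow⟩ := hyp C subset_rfl hne
    set C₂ := C \ {v} with hC2
    have hC2sub : C₂ ⊆ C := Set.diff_subset
    have hC2card : C₂.ncard = C.ncard - 1 := Set.ncard_diff_singleton_of_mem hv
    have hCpos : 1 ≤ C.ncard := (Set.ncard_pos C.toFinite).mpr hne
    have hsplit : edgesIn G C ⊆ edgesIn G C₂ ∪ (fun w => s(v, w)) '' (G.neighborSet v ∩ C) := by
      rintro e ⟨heG, heC⟩
      induction e with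
      | _ a b =>
        by_cases hva : v = a
        · subst hva
          exact Or.inr ⟨b, ⟨G.mem_edgeSet.mp heG, heC b (by simp)⟩, rfl⟩
        · by_cases hvb : v = b
          · subst hvb
            exact Or.inr ⟨a, ⟨(G.mem_edgeSet.mp heG).symm, heC a (by simp)⟩, Sym2.eq_swap⟩
          · refine Or.inl ⟨heG, ?_⟩
            intro x hx
            refine ⟨heC x hx, ?_⟩
            rcases Sym2.mem_iff.mp hx with rfl | rfl
            · exact fun h => hva (h ▸ rfl)
            · exact fun h => hvb (h ▸ rfl)
    have himg : ((fun w => s(v, w)) '' (G.neighborSet v ∩ C)).ncard ≤ 1 :=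
      le_trans (Set.ncard_image_le (Set.toFinite _)) hvlow
    rcases eq_or_ne C₂ ∅ with h2e | h2ne
    · -- C = {v}
      have hC1 : C = {v} := by
        ext x
        refine ⟨fun hx => ?_, fun hx => by rw [Set.mem_singleton_iff] at hx; exact hx ▸ hv⟩
        rw [Set.mem_singleton_iff]
        by_contra hne'
        have hx2 : x ∈ C₂ := ⟨hx, by simp [hne']⟩
        rw [h2e] at hx2
        exact Set.notMem_empty x hx2
      have hEmpty : edgesIn G C = ∅ := by
        ext e
        simp only [Set.mem_empty_iff_false, iff_false]
        rintro ⟨heG, heC⟩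
        induction e with
        | _ a b =>
          have ha := heC a (by simp)
          have hb := heC b (by simp)
          rw [hC1, Set.mem_singleton_iff] at ha hb
          rw [SimpleGraph.mem_edgeSet, ha, hb] at heG
          exact G.loopless.irrefl v heG
      rw [hEmpty, hC1]
      simp
    · have hlt : C₂.ncard < n := by
        rw [hC2card, ← hCn]; omega
      have h2hyp : ∀ C' ⊆ C₂, C'.Nonempty → ∃ v ∈ C', (G.neighborSet v ∩ C').ncard ≤ 1 :=
        fun C' hC' hne' => hyp C' (hC'.trans hC2sub) hne'
      rcases ih _ hlt C₂ rfl h2hyp with hlt2 | habs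
      · have := Set.ncard_union_le (edgesIn G C₂) ((fun w => s(v, w)) '' (G.neighborSet v ∩ C))
        have hle := Set.ncard_le_ncard hsplit (Set.toFinite _)
        have h2pos : 1 ≤ C₂.ncard :=
          (Set.ncard_pos C₂.toFinite).mpr (Set.nonempty_iff_ne_empty.mpr h2ne)
        omega
      · exact absurd habs h2ne

private lemma ncard_eq_filter_card (s : Set V) [DecidablePred (· ∈ s)] :
    s.ncard = (Finset.univ.filter (· ∈ s)).card := by
  classical
  rw [Set.ncard_eq_toFinset_card']
  congr 1
  ext x
  simp

private lemma handshake_set (G : SimpleGraph V) [DecidableRel G.Adj] (B : Set V)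
    [DecidablePred (· ∈ B)] :
    ∑ v ∈ univ.filter (· ∈ B), (univ.filter (fun b => G.Adj v b ∧ b ∈ B)).card
      = 2 * (edgesIn G B).ncard := by
  classical
  set H := myRestrict G B with hH
  have hAdj : ∀ u v, H.Adj u v ↔ G.Adj u v ∧ u ∈ B ∧ v ∈ B := fun _ _ => Iff.rfl
  have hES : H.edgeSet = edgesIn G B := by
    ext e
    induction e with
    | _ a b =>
      rw [mem_edgeSet, hAdj]
      constructor
      · rintro ⟨h, ha, hb⟩
        refine ⟨h, fun x hx => ?_⟩
        rcases Sym2.mem_iff.mp hx with rfl | rfl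
        · exact ha
        · exact hb
      · rintro ⟨h, hall⟩
        exact ⟨h, hall a (by simp), hall b (by simp)⟩
  have h1 : ∑ v, H.degree v = 2 * H.edgeFinset.card := H.sum_degrees_eq_twice_card_edges
  have hdeg : ∀ v, H.degree v =
      if v ∈ B then (univ.filter (fun b => G.Adj v b ∧ b ∈ B)).card else 0 := by
    intro v
    rw [← card_neighborFinset_eq_degree]
    by_cases hv : v ∈ B
    · rw [if_pos hv]
      congr 1
      ext w
      simp only [mem_neighborFinset, hAdj, mem_filter, mem_univ, true_and]
      tauto
    · rw [if_neg hv]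
      rw [card_eq_zero]
      ext w
      simp only [mem_neighborFinset, hAdj, Finset.notMem_empty, iff_false]
      tauto
  have h2 : H.edgeFinset.card = (edgesIn G B).ncard := by
    rw [Set.ncard_eq_toFinset_card' (edgesIn G B)]
    congr 1
    ext e
    simp [edgeFinset, hES]
  rw [← h2, ← h1, Finset.sum_filter]
  exact Finset.sum_congr rfl fun v _ => (hdeg v).symm

private lemma sum_fiber_fst (G : SimpleGraph V) [DecidableRel G.Adj] (A : Set V)
    [DecidablePred (· ∈ A)] :
    (univ.filter (fun p : V × V => G.Adj p.1 p.2 ∧ p.1 ∈ A ∧ p.2 ∉ A)).card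
      = ∑ v ∈ univ.filter (· ∈ A), (univ.filter (fun b => G.Adj v b ∧ b ∉ A)).card := by
  classical
  rw [Finset.card_eq_sum_card_fiberwise (f := Prod.fst) (t := univ.filter (· ∈ A))
    (fun p hp => by simp only [mem_coe, mem_filter, mem_univ, true_and] at hp ⊢; exact hp.2.1)]
  refine Finset.sum_congr rfl fun a ha => ?_
  have haA : a ∈ A := (mem_filter.mp ha).2
  refine Finset.card_bij (fun p _ => p.2) ?_ ?_ ?_
  · intro p hp
    simp only [mem_filter, mem_univ, true_and] at hp ⊢
    obtain ⟨⟨h1, h2, h3⟩, h4⟩ := hp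
    exact ⟨h4 ▸ h1, h3⟩
  · intro p hp q hq h
    simp only [mem_filter, mem_univ, true_and] at hp hq
    exact Prod.ext (hp.2.trans hq.2.symm) h
  · intro b hb
    simp only [mem_filter, mem_univ, true_and] at hb
    exact ⟨(a, b), by simp [hb.1, hb.2, haA], rfl⟩

private lemma sum_fiber_snd (G : SimpleGraph V) [DecidableRel G.Adj] (A : Set V)
    [DecidablePred (· ∈ A)] :
    (univ.filter (fun p : V × V => G.Adj p.1 p.2 ∧ p.1 ∈ A ∧ p.2 ∉ A)).card
      = ∑ v ∈ univ.filter (· ∉ A), (univ.filter (fun b => G.Adj v b ∧ b ∈ A)).card := by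
  classical
  rw [Finset.card_eq_sum_card_fiberwise (f := Prod.snd) (t := univ.filter (· ∉ A))
    (fun p hp => by simp only [mem_coe, mem_filter, mem_univ, true_and] at hp ⊢; exact hp.2.2)]
  refine Finset.sum_congr rfl fun a ha => ?_
  have haA : a ∉ A := (mem_filter.mp ha).2
  refine Finset.card_bij (fun p _ => p.1) ?_ ?_ ?_
  · intro p hp
    simp only [mem_filter, mem_univ, true_and] at hp ⊢
    obtain ⟨⟨h1, h2, h3⟩, h4⟩ := hp
    exact ⟨h4 ▸ h1.symm, h2⟩
  · intro p hp q hq h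
    simp only [mem_filter, mem_univ, true_and] at hp hq
    exact Prod.ext h (hp.2.trans hq.2.symm)
  · intro b hb
    simp only [mem_filter, mem_univ, true_and] at hb
    exact ⟨(b, a), by simp [hb.1.symm, hb.2, haA], rfl⟩

private lemma fullerene_card_ge (F : Fullerene V) : 20 ≤ Fintype.card V := by
  classical
  set G := F.G with hG
  have hdeg : ∀ v, G.degree v = 3 := by
    intro v
    rw [← card_neighborSet_eq_degree, ← Nat.card_eq_fintype_card, Nat.card_coe_set_eq]
    exact F.cubic v
  have hhs : 3 * Fintype.card V = 2 * G.edgeFinset.card := by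
    have := G.sum_degrees_eq_twice_card_edges
    simp only [hdeg] at this
    simpa [mul_comm] using this
  have hEncard : G.edgeSet.ncard = G.edgeFinset.card := by
    rw [← G.coe_edgeFinset, Set.ncard_coe_finset]
  have hsubF : ∀ f ∈ F.faces, f ⊆ G.edgeFinset := by
    intro f hf e he
    obtain ⟨v, c, hc, rfl⟩ := F.face_isCycle f hf
    rw [List.mem_toFinset] at he
    exact mem_edgeFinset.mpr (c.edges_subset_edgeSet he)
  have hdouble : ∑ f ∈ F.faces, f.card = 2 * G.edgeFinset.card := by
    have h1 : ∀ f ∈ F.faces, f.card = (G.edgeFinset.filter (· ∈ f)).card := by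
      intro f hf
      congr 1
      rw [Finset.filter_mem_eq_inter]
      exact (Finset.inter_eq_right.mpr (hsubF f hf)).symm
    rw [Finset.sum_congr rfl h1]
    simp only [Finset.card_filter]
    rw [Finset.sum_comm]
    have h2 : ∀ e ∈ G.edgeFinset, ∑ f ∈ F.faces, (if e ∈ f then 1 else 0) = 2 := by
      intro e he
      rw [← Finset.card_filter]
      exact F.edge_two_faces e (mem_edgeFinset.mp he)
    rw [Finset.sum_congr rfl h2]
    simp [mul_comm]
  have hfaces5 : 5 * F.faces.card ≤ ∑ f ∈ F.faces, f.card := by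
    calc 5 * F.faces.card = ∑ _f ∈ F.faces, 5 := by
          rw [Finset.sum_const, smul_eq_mul, mul_comm]
      _ ≤ ∑ f ∈ F.faces, f.card := Finset.sum_le_sum fun f hf => by
          rcases F.face_size f hf with h | h <;> omega
  have heuler := F.euler
  rw [hEncard] at heuler
  omega

private lemma no_short_cycle (G : SimpleGraph V)
    (hcubic : ∀ w : V, (G.neighborSet w).ncard = 3)
    (hn20 : 20 ≤ Fintype.card V)
    (hc5 : CyclicallyEdgeConnected G 5)
    {v : V} (c : G.Walk v v) (hc : c.IsCycle) (hle : c.length ≤ 4) : False := by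
  classical
  open Finset in
  set A : Set V := {x | x ∈ c.support} with hAdef
  have hAmem : ∀ x ∈ c.support, x ∈ A := fun x hx => hx
  -- cardinality of A
  have hA_card : A.ncard = c.length := by
    have hAfin : A = ↑c.support.toFinset := by ext x; simp [hAdef]
    rw [hAfin, Set.ncard_coe_finset]
    cases c with
    | nil => exact absurd rfl hc.ne_nil
    | @cons _ x _ h q =>
      have hnd : q.support.Nodup := by
        have := hc.support_nodup
        simpa using this
      have hv : v ∈ q.support := q.end_mem_support
      rw [Walk.support_cons, List.toFinset_cons,
        Finset.insert_eq_self.mpr (List.mem_toFinset.mpr hv),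
        List.toFinset_card_of_nodup hnd, Walk.length_support]
      simp
  have hlen3 : 3 ≤ c.length := hc.three_le_length
  -- Finset versions
  set Af := univ.filter (· ∈ A) with hAf
  set Bf := univ.filter (· ∉ A) with hBf
  have hAf_card : Af.card = A.ncard := (ncard_eq_filter_card A).symm
  have hcompl : A.ncard + Aᶜ.ncard = Fintype.card V := by
    rw [← Nat.card_eq_fintype_card]
    exact Set.ncard_add_ncard_compl A
  have hBf_eq : univ.filter (· ∈ Aᶜ) = Bf := by
    ext x; simp [hBf]
  have hBf_card : Bf.card = Aᶜ.ncard := by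
    rw [← hBf_eq]
    exact (ncard_eq_filter_card Aᶜ).symm
  -- the crossing-pair count
  set T := univ.filter (fun p : V × V => G.Adj p.1 p.2 ∧ p.1 ∈ A ∧ p.2 ∉ A) with hT
  -- degree split
  have hdeg3 : ∀ v : V, (univ.filter (fun b => G.Adj v b ∧ b ∈ A)).card
      + (univ.filter (fun b => G.Adj v b ∧ b ∉ A)).card = 3 := by
    intro w
    have hsplit := Finset.card_filter_add_card_filter_not
      (s := univ.filter (fun b => G.Adj w b)) (p := (· ∈ A))
    have hfa : (univ.filter (fun b => G.Adj w b)).filter (· ∈ A)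
        = univ.filter (fun b => G.Adj w b ∧ b ∈ A) := by
      rw [Finset.filter_filter]
    have hfb : (univ.filter (fun b => G.Adj w b)).filter (fun b => ¬ b ∈ A)
        = univ.filter (fun b => G.Adj w b ∧ b ∉ A) := by
      rw [Finset.filter_filter]
    have hdg : (univ.filter (fun b => G.Adj w b)).card = 3 := by
      rw [show (univ.filter (fun b => G.Adj w b)) = G.neighborFinset w from by
        ext b; simp [neighborFinset]]
      rw [card_neighborFinset_eq_degree, ← card_neighborSet_eq_degree,
        ← Nat.card_eq_fintype_card, Nat.card_coe_set_eq]
      exact hcubic w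
    rw [hfa, hfb] at hsplit
    rw [hsplit, hdg]
  -- handshake on A with the cycle inside gives a lower bound
  have hedgesA : c.length ≤ (edgesIn G A).ncard := by
    have hsubset : (↑c.edges.toFinset : Set (Sym2 V)) ⊆ edgesIn G A := by
      intro e he
      rw [Finset.mem_coe, List.mem_toFinset] at he
      refine ⟨c.edges_subset_edgeSet he, ?_⟩
      intro x hx
      induction e with
      | _ a b =>
        rcases Sym2.mem_iff.mp hx with rfl | rfl
        · exact hAmem _ (c.fst_mem_support_of_mem_edges he)
        · exact hAmem _ (c.snd_mem_support_of_mem_edges he)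
    calc c.length = c.edges.toFinset.card := by
          rw [List.toFinset_card_of_nodup hc.isTrail.edges_nodup, Walk.length_edges]
      _ = (↑c.edges.toFinset : Set (Sym2 V)).ncard := (Set.ncard_coe_finset _).symm
      _ ≤ (edgesIn G A).ncard := Set.ncard_le_ncard hsubset (Set.toFinite _)
  have hHA := handshake_set G A
  have hsumin : 2 * c.length ≤ ∑ v ∈ Af, (univ.filter (fun b => G.Adj v b ∧ b ∈ A)).card := by
    rw [hHA]; omega
  have hsplitA : ∑ v ∈ Af, ((univ.filter (fun b => G.Adj v b ∧ b ∈ A)).card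
      + (univ.filter (fun b => G.Adj v b ∧ b ∉ A)).card) = 3 * Af.card := by
    rw [Finset.sum_congr rfl (fun v _ => hdeg3 v), Finset.sum_const, smul_eq_mul, mul_comm]
  have hT1 : T.card = ∑ v ∈ Af, (univ.filter (fun b => G.Adj v b ∧ b ∉ A)).card :=
    sum_fiber_fst G A
  have hT4 : T.card ≤ 4 := by
    rw [Finset.sum_add_distrib] at hsplitA
    rw [hAf_card, hA_card] at hsplitA
    omega
  -- the B side contains a cycle
  have hBcyc : ¬ (G.induce Aᶜ).IsAcyclic := by
    by_cases hex : ∃ C ⊆ Aᶜ, C.Nonempty ∧ ∀ w ∈ C, 2 ≤ (G.neighborSet w ∩ C).ncard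
    · obtain ⟨C, hCsub, hCne, hCdeg⟩ := hex
      obtain ⟨w, c', hc', hsup⟩ := exists_cycle_in_set hCsub hCne hCdeg
      exact not_isAcyclic_induce c' hc' hsup
    · exfalso
      push_neg at hex
      have hlow : ∀ C' ⊆ Aᶜ, C'.Nonempty → ∃ w ∈ C', (G.neighborSet w ∩ C').ncard ≤ 1 := by
        intro C' hC' hne'
        obtain ⟨w, hwC, hwlt⟩ := hex C' hC' hne'
        exact ⟨w, hwC, by omega⟩
      have hpeel := edges_peel Aᶜ.ncard Aᶜ rfl hlow
      have hHB := handshake_set G Aᶜ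
      have hfix : ∀ w : V, (univ.filter (fun b => G.Adj w b ∧ b ∈ Aᶜ))
          = (univ.filter (fun b => G.Adj w b ∧ b ∉ A)) :=
        fun w => Finset.filter_congr (fun x _ => by simp)
      have hHB2 : ∑ w ∈ Bf, (univ.filter (fun b => G.Adj w b ∧ b ∉ A)).card
          = 2 * (edgesIn G Aᶜ).ncard := by
        rw [← hHB, hBf_eq]
        exact Finset.sum_congr rfl fun w _ => (congrArg Finset.card (hfix w)).symm
      have hT2 : T.card = ∑ w ∈ Bf, (univ.filter (fun b => G.Adj w b ∧ b ∈ A)).card := by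
        rw [hT, hBf]
        exact sum_fiber_snd G A
      have hsplitB : ∑ w ∈ Bf, ((univ.filter (fun b => G.Adj w b ∧ b ∈ A)).card
          + (univ.filter (fun b => G.Adj w b ∧ b ∉ A)).card) = 3 * Bf.card := by
        rw [Finset.sum_congr rfl (fun w _ => hdeg3 w), Finset.sum_const, smul_eq_mul, mul_comm]
      rw [Finset.sum_add_distrib] at hsplitB
      rcases hpeel with hlt | hempty
      · omega
      · rw [hempty, Set.ncard_empty] at hcompl
        omega
  have hAcyc : ¬ (G.induce A).IsAcyclic := not_isAcyclic_induce c hc hAmem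
  set S : Set (Sym2 V) := {e | ∃ u w, G.Adj u w ∧ u ∈ A ∧ w ∉ A ∧ e = s(u, w)} with hSdef
  have hSsub : S ⊆ G.edgeSet := by
    rintro e ⟨u, w, h, -, -, rfl⟩
    exact h
  have hcut : IsCyclicEdgeCut G S :=
    ⟨hSsub, A, fun u w h hu hw => ⟨u, w, h, hu, hw, rfl⟩, hAcyc, hBcyc⟩
  have h5 := hc5 S hcut
  have hST : S.ncard ≤ T.card := by
    have himg : S ⊆ Function.uncurry Sym2.mk '' (↑T : Set (V × V)) := by
      rintro e ⟨u, w, h, hu, hw, rfl⟩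
      exact ⟨(u, w), by simp [hT, h, hu, hw], rfl⟩
    calc S.ncard ≤ (Function.uncurry Sym2.mk '' (↑T : Set (V × V))).ncard :=
          Set.ncard_le_ncard himg (Set.toFinite _)
      _ ≤ (↑T : Set (V × V)).ncard := Set.ncard_image_le (Set.toFinite _)
      _ = T.card := Set.ncard_coe_finset T
  omega


end FullereneAux

/-- A fullerene contains no cycle of length 3 or 4; its girth is at least 5,
and exactly 5 since some pentagonal face bounds a 5-cycle. Here cyclic
5-edge-connectivity of fullerenes is used. -/
theorem fullerene_girth_eq_five {V : Type} [Fintype V] [DecidableEq V]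
    (F : Fullerene V) (hc5 : CyclicallyEdgeConnected F.G 5)
    (hpent : ∃ (v : V) (c : F.G.Walk v v), c.IsCycle ∧ c.length = 5) :
    (∀ (v : V) (c : F.G.Walk v v), c.IsCycle → c.length ≠ 3 ∧ c.length ≠ 4) ∧
      F.G.egirth = 5 := by
  classical
  have key : ∀ (v : V) (c : F.G.Walk v v), c.IsCycle → c.length ≤ 4 → False :=
    fun v c hc hle => no_short_cycle F.G F.cubic (fullerene_card_ge F) hc5 c hc hle
  refine ⟨fun v c hc => ⟨fun h3 => key v c hc (by omega), fun h4 => key v c hc (by omega)⟩, ?_⟩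
  obtain ⟨w, d, hd, hd5⟩ := hpent
  refine le_antisymm ?_ ?_
  · have hle : F.G.egirth ≤ (d.length : ℕ∞) := by
      rw [SimpleGraph.egirth]
      exact le_trans (le_trans (iInf_le _ w) (iInf_le _ d)) (iInf_le _ hd)
    rw [hd5] at hle
    simpa using hle
  · rw [SimpleGraph.le_egirth]
    intro a wk hwk
    have h3 := hwk.three_le_length
    have hne := key a wk hwk
    have h5 : 5 ≤ wk.length := by
      by_contra h
      push_neg at h
      exact hne (by omega)
    exact_mod_cast Nat.cast_le.mpr h5
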